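/- arXiv:1102.3268 — 5 statements merged into one kernel-verified Lean document; each statement's English description precedes it below -/
import Mathlib

section
/- Let (T(t))_{t≥0} be a strongly continuous semigroup on a Banach space X, Y a Banach space, and C a linear map defined on the domain of the generator with values in Y. Suppose C is admissible with constant M(τ) for each τ > 0 (meaning ∫₀^τ ‖C T(t)x‖² dt ≤ M(τ)²‖x‖² for all x in the domain) and exactly observable in time τ with constant m(τ) (meaning ∫₀^τ ‖C T(t)x‖² dt ≥ m(τ)²‖x‖²). If there exist 0 < η < τ with M(η) < m(τ), then for all x in the domain of the generator, ‖T(η)x‖² ≥ M(τ−η)⁻² (m(τ)² − M(η)²) ‖x‖². In particular ε(η) > 0. -/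
open MeasureTheory

/-- `epsInf T t` is `ε(t) := inf { ‖T(t)x‖ : ‖x‖ = 1 }`. -/
noncomputable def epsInf {X : Type*} [NormedAddCommGroup X] [NormedSpace ℂ X]
    (T : ℝ → X →L[ℂ] X) (t : ℝ) : ℝ :=
  sInf ((fun x => ‖T t x‖) '' {x : X | ‖x‖ = 1})

/-- If `C` is admissible with constants `M(τ)` and exactly observable in time `τ` with
constant `m(τ)`, and `M(η) < m(τ)` for some `0 < η < τ` (the BFC condition), then
`‖T(η)x‖² ≥ M(τ-η)⁻² (m(τ)² - M(η)²) ‖x‖²` on the domain; in particular `ε(η) > 0`. -/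
theorem stmt2 {X Y : Type*} [NormedAddCommGroup X] [NormedSpace ℂ X] [CompleteSpace X]
    [Nontrivial X] [NormedAddCommGroup Y] [NormedSpace ℂ Y]
    (T : ℝ → X →L[ℂ] X)
    (hT0 : T 0 = 1)
    (hTadd : ∀ t s : ℝ, 0 ≤ t → 0 ≤ s → T (t + s) = (T t).comp (T s))
    (hTcont : ∀ x : X, ContinuousOn (fun t => T t x) (Set.Ici 0))
    (D : Set X) (hD : Dense D) (hDinv : ∀ x ∈ D, ∀ t : ℝ, 0 ≤ t → T t x ∈ D)
    (C : X → Y) (M m : ℝ → ℝ) (hMnn : ∀ t, 0 ≤ M t) (hmnn : ∀ t, 0 ≤ m t)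
    (hint : ∀ x ∈ D, ∀ a b : ℝ, IntervalIntegrable (fun t => ‖C (T t x)‖ ^ 2) volume a b)
    (hadm : ∀ σ : ℝ, 0 < σ → ∀ x ∈ D,
      ∫ t in (0:ℝ)..σ, ‖C (T t x)‖ ^ 2 ≤ (M σ) ^ 2 * ‖x‖ ^ 2)
    (η τ : ℝ) (hη : 0 < η) (hητ : η < τ)
    (hobs : ∀ x ∈ D, (m τ) ^ 2 * ‖x‖ ^ 2 ≤ ∫ t in (0:ℝ)..τ, ‖C (T t x)‖ ^ 2)
    (hBFC : M η < m τ) :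
    (∀ x ∈ D, ((M (τ - η))⁻¹) ^ 2 * ((m τ) ^ 2 - (M η) ^ 2) * ‖x‖ ^ 2 ≤ ‖T η x‖ ^ 2) ∧
      0 < epsInf T η := by
  have hτη : (0:ℝ) < τ - η := by linarith
  -- Step A: key inequality on D
  have key : ∀ x ∈ D, (m τ) ^ 2 * ‖x‖ ^ 2 ≤
      (M η) ^ 2 * ‖x‖ ^ 2 + (M (τ - η)) ^ 2 * ‖T η x‖ ^ 2 := by
    intro x hx
    have hsplit : (∫ t in (0:ℝ)..τ, ‖C (T t x)‖ ^ 2) =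
        (∫ t in (0:ℝ)..η, ‖C (T t x)‖ ^ 2) + ∫ t in η..τ, ‖C (T t x)‖ ^ 2 :=
      (intervalIntegral.integral_add_adjacent_intervals (hint x hx 0 η) (hint x hx η τ)).symm
    have htail : (∫ t in η..τ, ‖C (T t x)‖ ^ 2) =
        ∫ s in (0:ℝ)..(τ - η), ‖C (T s (T η x))‖ ^ 2 := by
      have h1 : (∫ s in (0:ℝ)..(τ - η), ‖C (T (s + η) x)‖ ^ 2) =
          ∫ t in (0 + η)..(τ - η + η), ‖C (T t x)‖ ^ 2 :=
        intervalIntegral.integral_comp_add_right (fun t => ‖C (T t x)‖ ^ 2) η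
      have h2 : (∫ s in (0:ℝ)..(τ - η), ‖C (T (s + η) x)‖ ^ 2) =
          ∫ s in (0:ℝ)..(τ - η), ‖C (T s (T η x))‖ ^ 2 := by
        apply intervalIntegral.integral_congr
        intro s hs
        rw [Set.uIcc_of_le hτη.le] at hs
        have hs0 : 0 ≤ s := hs.1
        show ‖C (T (s + η) x)‖ ^ 2 = ‖C (T s (T η x))‖ ^ 2
        rw [hTadd s η hs0 hη.le]
        rfl
      rw [← h2, h1]
      norm_num
    have hb1 : (∫ t in (0:ℝ)..η, ‖C (T t x)‖ ^ 2) ≤ (M η) ^ 2 * ‖x‖ ^ 2 :=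
      hadm η hη x hx
    have hb2 : (∫ s in (0:ℝ)..(τ - η), ‖C (T s (T η x))‖ ^ 2) ≤
        (M (τ - η)) ^ 2 * ‖T η x‖ ^ 2 :=
      hadm (τ - η) hτη (T η x) (hDinv x hx η hη.le)
    have := hobs x hx
    rw [hsplit, htail] at this
    linarith
  -- Step B: M (τ - η) > 0
  have hMpos : 0 < M (τ - η) := by
    rcases (hMnn (τ - η)).lt_or_eq with h | h
    · exact h
    · exfalso
      obtain ⟨y, hy⟩ := exists_ne (0 : X)
      have hy' : 0 < ‖y‖ := norm_pos_iff.mpr hy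
      obtain ⟨x₀, hx₀D, hx₀⟩ := hD.exists_dist_lt y (half_pos hy')
      have hx₀ne : x₀ ≠ 0 := by
        intro h0
        rw [h0, dist_zero_right] at hx₀
        linarith
      have hx₀pos : 0 < ‖x₀‖ ^ 2 := pow_pos (norm_pos_iff.mpr hx₀ne) 2
      have hk := key x₀ hx₀D
      rw [← h] at hk
      have : (m τ) ^ 2 ≤ (M η) ^ 2 := by nlinarith
      nlinarith [hMnn η, hmnn τ]
  have hc : 0 < ((M (τ - η))⁻¹) ^ 2 * ((m τ) ^ 2 - (M η) ^ 2) := by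
    have : (M η) ^ 2 < (m τ) ^ 2 := by nlinarith [hMnn η]
    have h2 : 0 < ((M (τ - η))⁻¹) ^ 2 := pow_pos (inv_pos.mpr hMpos) 2
    nlinarith
  set c : ℝ := ((M (τ - η))⁻¹) ^ 2 * ((m τ) ^ 2 - (M η) ^ 2) with hcdef
  -- Step C: first conclusion on D
  have main : ∀ x ∈ D, c * ‖x‖ ^ 2 ≤ ‖T η x‖ ^ 2 := by
    intro x hx
    have hk := key x hx
    have hM2 : 0 < (M (τ - η)) ^ 2 := pow_pos hMpos 2
    rw [hcdef, show ((M (τ - η))⁻¹) ^ 2 * ((m τ) ^ 2 - (M η) ^ 2) * ‖x‖ ^ 2 =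
      (((m τ) ^ 2 - (M η) ^ 2) * ‖x‖ ^ 2) / (M (τ - η)) ^ 2 by
        field_simp]
    rw [div_le_iff₀ hM2]
    nlinarith
  -- Step D: extend to all of X by density
  have hall : ∀ x : X, c * ‖x‖ ^ 2 ≤ ‖T η x‖ ^ 2 := by
    have hS : IsClosed {x : X | c * ‖x‖ ^ 2 ≤ ‖T η x‖ ^ 2} :=
      isClosed_le (by continuity) (by continuity)
    have hsub : D ⊆ {x : X | c * ‖x‖ ^ 2 ≤ ‖T η x‖ ^ 2} := fun x hx => main x hx
    intro x
    exact hS.closure_subset_iff.mpr hsub (hD x)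
  refine ⟨main, ?_⟩
  -- Step E: epsInf positive
  have hsqrt : 0 < Real.sqrt c := Real.sqrt_pos.mpr hc
  have hne : ((fun x => ‖T η x‖) '' {x : X | ‖x‖ = 1}).Nonempty := by
    obtain ⟨y, hy⟩ := exists_ne (0 : X)
    have hy' : (0:ℝ) < ‖y‖ := norm_pos_iff.mpr hy
    refine ⟨‖T η ((‖y‖⁻¹ : ℂ) • y)‖, ⟨(‖y‖⁻¹ : ℂ) • y, ?_, rfl⟩⟩
    simp [norm_smul, inv_mul_cancel₀ hy'.ne']
  have hlb : ∀ b ∈ (fun x => ‖T η x‖) '' {x : X | ‖x‖ = 1}, Real.sqrt c ≤ b := by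
    rintro b ⟨x, hx, rfl⟩
    have := hall x
    rw [Set.mem_setOf_eq] at hx
    rw [hx] at this
    have h1 : c ≤ ‖T η x‖ ^ 2 := by linarith
    calc Real.sqrt c ≤ Real.sqrt (‖T η x‖ ^ 2) := Real.sqrt_le_sqrt h1
      _ = ‖T η x‖ := by rw [Real.sqrt_sq (norm_nonneg _)]
  have : Real.sqrt c ≤ epsInf T η := le_csInf hne hlb
  linarith
end

section
/- Let A be a self-adjoint operator on an infinite-dimensional separable Hilbert space with compact resolvent and eigenvalues λₙ → +∞, and let β ∈ (1/2, 1). Then the lower square function estimate ‖x‖² ≤ K² ∫₀^∞ ‖(tA)^{−β}(T(2t^{2β}) − T(t^{2β}))x‖² dt/t, where T(t) = e^{−tA}, fails for every constant K > 0. More precisely, applying the right-hand side to a normalized eigenvector φₙ of eigenvalue λₙ gives the value c(β) λₙ^{1−2β} with c(β) = (1/(2β)) ∫₀^∞ (e^{−2s} − e^{−s})² ds/s², which tends to 0 as n → ∞. -/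
/-!
On an eigenvector `φ n` everything is scalar: with `l = lam n` and `f s = (e^{-2s} - e^{-s})²`,
the integrand is `l^{-2β} f (l t^{2β}) / t^{2β+1}`. The substitutions `u = t^{2β}` and `s = l u`
turn the integral into `l^{1-2β} / (2β) · ∫ f s / s²`, which tends to `0` because `β > 1/2`.
So the unit vectors `φ n` violate every lower square function estimate.
-/

open MeasureTheory Filter Set Real Topology

theorem integral_comp_rpow_div_rpow_add_one_Ioi (f : ℝ → ℝ) {p : ℝ} (hp : 0 < p) :
    ∫ t in Ioi 0, f (t ^ p) / t ^ (p + 1) = p⁻¹ * ∫ u in Ioi 0, f u / u ^ 2 := by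
  rw [← integral_comp_rpow_Ioi_of_pos (g := fun u => f u / u ^ 2) hp, ← integral_const_mul]
  refine setIntegral_congr_fun measurableSet_Ioi fun t (ht : 0 < t) => ?_
  have hsq : t ^ (p - 1) * t ^ (p + 1) = (t ^ p) ^ 2 := by
    rw [← rpow_add ht, sq, ← rpow_add ht]; ring_nf
  have htp1 : 0 < t ^ (p + 1) := rpow_pos_of_pos ht _
  have htp : 0 < t ^ p := rpow_pos_of_pos ht _
  rw [smul_eq_mul, ← hsq]
  field_simp

theorem integral_comp_mul_left_div_sq_Ioi (f : ℝ → ℝ) {l : ℝ} (hl : 0 < l) :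
    ∫ u in Ioi 0, f (l * u) / u ^ 2 = l * ∫ s in Ioi 0, f s / s ^ 2 := by
  have hscale : ∀ u, 0 < u → f (l * u) / u ^ 2 = l ^ 2 * (f (l * u) / (l * u) ^ 2) := by
    intro u hu
    field_simp
  rw [setIntegral_congr_fun measurableSet_Ioi hscale, integral_const_mul,
    integral_comp_mul_left_Ioi (fun s => f s / s ^ 2) 0 hl, mul_zero, smul_eq_mul]
  field_simp

theorem integral_rpow_neg_mul_heat_diff_sq {l β : ℝ} (hl : 0 < l) (hβ : 0 < β) :
    ∫ t in Ioi 0,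
        ((t * l) ^ (-β) * (exp (-(2 * t ^ (2 * β) * l)) - exp (-(t ^ (2 * β) * l)))) ^ 2 / t
      = 1 / (2 * β) * (∫ s in Ioi 0, (exp (-2 * s) - exp (-s)) ^ 2 / s ^ 2) *
          l ^ (1 - 2 * β) := by
  set f : ℝ → ℝ := fun s => (exp (-2 * s) - exp (-s)) ^ 2
  have hpt : ∀ t, 0 < t →
      ((t * l) ^ (-β) * (exp (-(2 * t ^ (2 * β) * l)) - exp (-(t ^ (2 * β) * l)))) ^ 2 / t
        = l ^ (-(2 * β)) * (f (l * t ^ (2 * β)) / t ^ (2 * β + 1)) := by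
    intro t ht
    have hpow : ∀ x : ℝ, 0 < x → (x ^ (-β)) ^ 2 = x ^ (-(2 * β)) := fun x hx => by
      rw [← rpow_natCast, ← rpow_mul hx.le]; ring_nf
    have ht1 : t ^ (-(2 * β)) / t = 1 / t ^ (2 * β + 1) := by
      rw [rpow_add ht, rpow_one, rpow_neg ht.le]; field_simp
    simp only [f, mul_pow, mul_rpow ht.le hl.le, hpow t ht, hpow l hl]
    rw [show -2 * (l * t ^ (2 * β)) = -(2 * t ^ (2 * β) * l) by ring,
      show -(l * t ^ (2 * β)) = -(t ^ (2 * β) * l) by ring,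
      mul_comm _ (l ^ _), mul_assoc, mul_div_assoc, mul_comm _ (_ ^ 2), mul_div_assoc, ht1]
    ring
  have hl1 : l ^ (-(2 * β)) * l = l ^ (1 - 2 * β) := by
    rw [sub_eq_neg_add, rpow_add hl, rpow_one, mul_comm]
  rw [setIntegral_congr_fun measurableSet_Ioi hpt, integral_const_mul,
    integral_comp_rpow_div_rpow_add_one_Ioi (fun u => f (l * u)) (by positivity),
    integral_comp_mul_left_div_sq_Ioi f hl, ← hl1]
  ring

theorem norm_apply_sub_apply_of_eigenvector {E : Type*} [NormedAddCommGroup E] [NormedSpace ℂ E]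
    {S₁ S₂ B : E →L[ℂ] E} {v : E} {a b r : ℝ} (hv : ‖v‖ = 1)
    (h₁ : S₁ v = (a : ℂ) • v) (h₂ : S₂ v = (b : ℂ) • v) (hB : B v = (r : ℂ) • v) :
    ‖B ((S₁ - S₂) v)‖ = |r * (a - b)| := by
  rw [sub_apply, h₁, h₂, ← sub_smul, ← Complex.ofReal_sub, map_smul, hB,
    smul_smul, ← Complex.ofReal_mul, norm_smul, hv, mul_one, Complex.norm_real, norm_eq_abs,
    mul_comm]

theorem not_forall_norm_sq_le_const_mul_of_tendsto_zero {E : Type*} [SeminormedAddCommGroup E]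
    (Q : E → ℝ) {v : ℕ → E} (hv : ∀ n, ‖v n‖ = 1)
    (hQ : Tendsto (fun n => Q (v n)) atTop (𝓝 0)) (K : ℝ) :
    ¬ ∀ x : E, ‖x‖ ^ 2 ≤ K ^ 2 * Q x := by
  intro hbound
  have hsmall : ∀ᶠ n in atTop, K ^ 2 * Q (v n) < 1 := by
    have hlim : Tendsto (fun n => K ^ 2 * Q (v n)) atTop (𝓝 0) := by
      simpa using hQ.const_mul (K ^ 2)
    exact hlim.eventually_lt_const zero_lt_one
  obtain ⟨n, hn⟩ := hsmall.exists
  have := hbound (v n)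
  rw [hv n, one_pow] at this
  linarith

theorem stmt9_general {H : Type*} [NormedAddCommGroup H] [InnerProductSpace ℂ H]
    (φ : ℕ → H) (lam : ℕ → ℝ)
    (hortho : Orthonormal ℂ φ)
    (hlam : Tendsto lam atTop atTop)
    (β : ℝ) (hβ : 1 / 2 < β)
    (T : ℝ → H →L[ℂ] H) (Bt : ℝ → H →L[ℂ] H)
    (hT : ∀ s : ℝ, 0 ≤ s → ∀ n, T s (φ n) = ((Real.exp (-(s * lam n)) : ℝ) : ℂ) • φ n)
    (hB : ∀ t : ℝ, 0 < t → ∀ n,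
      Bt t (φ n) = (((t * lam n) ^ (-β) : ℝ) : ℂ) • φ n) :
    (∀ n, 0 < lam n →
      (∫ t in Set.Ioi (0:ℝ),
          ‖Bt t ((T (2 * t ^ (2 * β)) - T (t ^ (2 * β))) (φ n))‖ ^ 2 / t)
        = (1 / (2 * β)) *
            (∫ s in Set.Ioi (0:ℝ), (Real.exp (-2 * s) - Real.exp (-s)) ^ 2 / s ^ 2) *
            lam n ^ (1 - 2 * β)) ∧
    Tendsto (fun n =>
        (1 / (2 * β)) *
            (∫ s in Set.Ioi (0:ℝ), (Real.exp (-2 * s) - Real.exp (-s)) ^ 2 / s ^ 2) *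
            lam n ^ (1 - 2 * β)) atTop (nhds 0) ∧
    ∀ K : ℝ, 0 < K →
      ¬ (∀ x : H, ‖x‖ ^ 2 ≤ K ^ 2 * ∫ t in Set.Ioi (0:ℝ),
            ‖Bt t ((T (2 * t ^ (2 * β)) - T (t ^ (2 * β))) x)‖ ^ 2 / t) := by
  set Q : H → ℝ := fun x =>
    ∫ t in Ioi 0, ‖Bt t ((T (2 * t ^ (2 * β)) - T (t ^ (2 * β))) x)‖ ^ 2 / t
  set C : ℝ := 1 / (2 * β) * ∫ s in Ioi 0, (exp (-2 * s) - exp (-s)) ^ 2 / s ^ 2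
  have hQ : ∀ n, 0 < lam n → Q (φ n) = C * lam n ^ (1 - 2 * β) := by
    intro n hn
    rw [← integral_rpow_neg_mul_heat_diff_sq hn (by linarith)]
    refine setIntegral_congr_fun measurableSet_Ioi fun t (ht : 0 < t) => ?_
    rw [norm_apply_sub_apply_of_eigenvector (hortho.1 n) (hT _ (by positivity) n)
      (hT _ (by positivity) n) (hB t ht n), sq_abs]
  have hlim : Tendsto (fun n => C * lam n ^ (1 - 2 * β)) atTop (𝓝 0) := by
    have hpow := (tendsto_rpow_neg_atTop (y := 2 * β - 1) (by linarith)).comp hlam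
    simpa [neg_sub] using hpow.const_mul C
  refine ⟨hQ, hlim, fun K _ => not_forall_norm_sq_le_const_mul_of_tendsto_zero Q hortho.1
    (hlim.congr' ?_) K⟩
  filter_upwards [hlam.eventually_gt_atTop 0] with n hn using (hQ n hn).symm

/-- For a nonnegative self-adjoint operator with compact resolvent (given here through an
orthonormal system of eigenvectors `φ n` with eigenvalues `lam n → ∞`), the heat semigroup
`T(s) = e^{-sA}` and the fractional powers `(tA)^{-β}` act diagonally; for `β ∈ (1/2, 1)`
the lower square function estimate fails for every `K > 0`: testing on `φ n` produces the
value `c(β) λₙ^{1-2β} → 0`. -/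
theorem stmt9 {H : Type*} [NormedAddCommGroup H] [InnerProductSpace ℂ H] [CompleteSpace H]
    (φ : ℕ → H) (lam : ℕ → ℝ)
    (hortho : Orthonormal ℂ φ)
    (hlam0 : ∀ n, 0 ≤ lam n)
    (hlam : Tendsto lam atTop atTop)
    (β : ℝ) (hβ : 1 / 2 < β) (hβ1 : β < 1)
    (T : ℝ → H →L[ℂ] H) (Bt : ℝ → H →L[ℂ] H)
    (hT : ∀ s : ℝ, 0 ≤ s → ∀ n, T s (φ n) = ((Real.exp (-(s * lam n)) : ℝ) : ℂ) • φ n)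
    (hB : ∀ t : ℝ, 0 < t → ∀ n,
      Bt t (φ n) = (((t * lam n) ^ (-β) : ℝ) : ℂ) • φ n) :
    (∀ n, 0 < lam n →
      (∫ t in Set.Ioi (0:ℝ),
          ‖Bt t ((T (2 * t ^ (2 * β)) - T (t ^ (2 * β))) (φ n))‖ ^ 2 / t)
        = (1 / (2 * β)) *
            (∫ s in Set.Ioi (0:ℝ), (Real.exp (-2 * s) - Real.exp (-s)) ^ 2 / s ^ 2) *
            lam n ^ (1 - 2 * β)) ∧
    Tendsto (fun n =>
        (1 / (2 * β)) *
            (∫ s in Set.Ioi (0:ℝ), (Real.exp (-2 * s) - Real.exp (-s)) ^ 2 / s ^ 2) *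
            lam n ^ (1 - 2 * β)) atTop (nhds 0) ∧
    ∀ K : ℝ, 0 < K →
      ¬ (∀ x : H, ‖x‖ ^ 2 ≤ K ^ 2 * ∫ t in Set.Ioi (0:ℝ),
            ‖Bt t ((T (2 * t ^ (2 * β)) - T (t ^ (2 * β))) x)‖ ^ 2 / t) :=
  stmt9_general φ lam hortho hlam β hβ T Bt hT hB
end

section
/- Let −A generate a strongly continuous semigroup on a Banach space X and let C : D(A) → Y satisfy, for some constants M, M'', ω, τ > 0 with M·M''·e^{−ωτ} < 1: ‖x‖² ≤ M ∫₀^∞ ‖C e^{−ωt} T(t)x‖²_Y dt and ∫₀^∞ ‖C e^{−ωt}T(t)T(τ)x‖²_Y dt ≤ M''‖x‖² for all x ∈ D(A). Then C is exactly observable in time τ: there is m > 0 with m²‖x‖² ≤ ∫₀^τ ‖C T(t)x‖²_Y dt for all x ∈ D(A). -/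
open MeasureTheory Set Real

/-!
Split `∫₀^∞ e^{-2ωt} ‖C T(t)x‖² dt` at `τ`. On `(0, τ]` the weight is at most `1`, so that part is
bounded by the observation integral over `[0, τ]`; by the semigroup law the tail is
`e^{-2ωτ} ∫₀^∞ e^{-2ωs} ‖C T(s)T(τ)x‖² ds ≤ e^{-ωτ} M'' ‖x‖²`. Hence
`‖x‖² ≤ M ∫₀^τ ‖C T(t)x‖² dt + M M'' e^{-ωτ} ‖x‖²`, and the smallness condition lets the last term be
absorbed, giving `m² = (1 - M M'' e^{-ωτ}) / M`.
-/

theorem setIntegral_Ioi_exp_mul_eq (c τ : ℝ) (F : ℝ → ℝ) :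
    ∫ t in Ioi τ, exp (c * t) * F t = exp (c * τ) * ∫ s in Ioi 0, exp (c * s) * F (s + τ) := by
  have hpre : (fun s : ℝ => s + τ) ⁻¹' Ioi τ = Ioi 0 := by
    ext s
    simp
  rw [← (measurePreserving_add_right volume τ).setIntegral_preimage_emb
    (measurableEmbedding_addRight τ), hpre, ← integral_const_mul]
  refine setIntegral_congr_fun measurableSet_Ioi fun s _ => ?_
  rw [mul_add, exp_add]
  ring

theorem intervalIntegrable_of_integrableOn_exp_mul {F : ℝ → ℝ} {c a b : ℝ} (hab : a ≤ b)
    (h : IntegrableOn (fun t => exp (c * t) * F t) (Ioc a b)) : IntervalIntegrable F volume a b := by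
  rw [intervalIntegrable_iff_integrableOn_Ioc_of_le hab]
  have hcont : ContinuousOn (fun t => exp (-c * t)) (Icc a b) := by fun_prop
  refine (h.continuousOn_mul_of_subset hcont isCompact_Icc measurableSet_Ioc
    Ioc_subset_Icc_self).congr_fun (fun t _ => ?_) measurableSet_Ioc
  simp only [← mul_assoc, ← exp_add, neg_mul, neg_add_cancel, exp_zero, one_mul]

theorem setIntegral_Ioi_exp_mul_le {F : ℝ → ℝ} {c τ : ℝ} (hc : c ≤ 0) (hτ : 0 ≤ τ)
    (hF : ∀ t, 0 ≤ F t) (hint : IntegrableOn (fun t => exp (c * t) * F t) (Ioi 0)) :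
    ∫ t in Ioi 0, exp (c * t) * F t ≤
      (∫ t in 0..τ, F t) + exp (c * τ) * ∫ s in Ioi 0, exp (c * s) * F (s + τ) := by
  have hIoc : IntegrableOn _ (Ioc 0 τ) := hint.mono_set Ioc_subset_Ioi_self
  rw [← intervalIntegral.integral_interval_add_Ioi hint (hint.mono_set (Ioi_subset_Ioi hτ)),
    setIntegral_Ioi_exp_mul_eq]
  gcongr
  refine intervalIntegral.integral_mono_on hτ
    ((intervalIntegrable_iff_integrableOn_Ioc_of_le hτ).2 hIoc)
    (intervalIntegrable_of_integrableOn_exp_mul hτ hIoc) fun t ht => ?_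
  exact mul_le_of_le_one_left (hF t) (exp_le_one_iff.2 (mul_nonpos_of_nonpos_of_nonneg hc ht.1))

theorem stmt12_general {X Y : Type*} [NormedAddCommGroup X] [NormedSpace ℂ X]
    [NormedAddCommGroup Y]
    (T : ℝ → X →L[ℂ] X)
    (hTadd : ∀ t s : ℝ, 0 ≤ t → 0 ≤ s → T (t + s) = (T t).comp (T s))
    (D : Set X)
    (C : X → Y)
    (M M'' ω τ : ℝ) (hM : 0 < M) (hM'' : 0 < M'') (hω : 0 < ω) (hτ : 0 < τ)
    (hsmall : M * M'' * Real.exp (-ω * τ) < 1)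
    (hint : ∀ x ∈ D,
      IntegrableOn (fun t => Real.exp (-2 * ω * t) * ‖C (T t x)‖ ^ 2) (Set.Ioi 0))
    (h1 : ∀ x ∈ D,
      ‖x‖ ^ 2 ≤ M * ∫ t in Set.Ioi (0:ℝ), Real.exp (-2 * ω * t) * ‖C (T t x)‖ ^ 2)
    (h2 : ∀ x ∈ D,
      (∫ t in Set.Ioi (0:ℝ), Real.exp (-2 * ω * t) * ‖C (T t (T τ x))‖ ^ 2)
        ≤ M'' * ‖x‖ ^ 2) :
    ∃ m : ℝ, 0 < m ∧ ∀ x ∈ D, m ^ 2 * ‖x‖ ^ 2 ≤ ∫ t in (0:ℝ)..τ, ‖C (T t x)‖ ^ 2 := by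
  have hgap : 0 < (1 - M * M'' * exp (-ω * τ)) / M := div_pos (by linarith) hM
  refine ⟨√((1 - M * M'' * exp (-ω * τ)) / M), sqrt_pos.2 hgap, fun x hx => ?_⟩
  have hshift : ∫ s in Ioi 0, exp (-2 * ω * s) * ‖C (T (s + τ) x)‖ ^ 2 =
      ∫ s in Ioi 0, exp (-2 * ω * s) * ‖C (T s (T τ x))‖ ^ 2 :=
    setIntegral_congr_fun measurableSet_Ioi fun s hs => by rw [hTadd s τ (le_of_lt hs) hτ.le]; rfl
  have hsplit := setIntegral_Ioi_exp_mul_le (F := fun t => ‖C (T t x)‖ ^ 2) (by linarith) hτ.le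
    (fun t => by positivity) (hint x hx)
  rw [hshift] at hsplit
  have hobs : ‖x‖ ^ 2 ≤ M * ((∫ t in (0:ℝ)..τ, ‖C (T t x)‖ ^ 2) +
      exp (-ω * τ) * (M'' * ‖x‖ ^ 2)) := calc
    ‖x‖ ^ 2 ≤ M * ∫ t in Ioi 0, exp (-2 * ω * t) * ‖C (T t x)‖ ^ 2 := h1 x hx
    _ ≤ M * ((∫ t in (0:ℝ)..τ, ‖C (T t x)‖ ^ 2) + exp (-2 * ω * τ) * (M'' * ‖x‖ ^ 2)) := by
      gcongr
      exact hsplit.trans (by gcongr; exact h2 x hx)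
    _ ≤ _ := by gcongr; nlinarith
  rw [sq_sqrt hgap.le, div_mul_eq_mul_div, div_le_iff₀ hM]
  linear_combination hobs

/-- Finite-time exact observability from a weighted infinite-time estimate: if
`‖x‖² ≤ M ∫₀^∞ ‖C e^{-ωt} T(t)x‖² dt` and
`∫₀^∞ ‖C e^{-ωt} T(t) T(τ)x‖² dt ≤ M''‖x‖²` with `M·M''·e^{-ωτ} < 1`, then `C` is
exactly observable in time `τ`. -/
theorem stmt12 {X Y : Type*} [NormedAddCommGroup X] [NormedSpace ℂ X] [CompleteSpace X]
    [NormedAddCommGroup Y] [NormedSpace ℂ Y]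
    (T : ℝ → X →L[ℂ] X)
    (hT0 : T 0 = 1)
    (hTadd : ∀ t s : ℝ, 0 ≤ t → 0 ≤ s → T (t + s) = (T t).comp (T s))
    (hTcont : ∀ x : X, ContinuousOn (fun t => T t x) (Set.Ici 0))
    (D : Set X) (hTD : ∀ x ∈ D, ∀ t : ℝ, 0 ≤ t → T t x ∈ D)
    (C : X → Y)
    (M M'' ω τ : ℝ) (hM : 0 < M) (hM'' : 0 < M'') (hω : 0 < ω) (hτ : 0 < τ)
    (hsmall : M * M'' * Real.exp (-ω * τ) < 1)
    (hint : ∀ x ∈ D,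
      IntegrableOn (fun t => Real.exp (-2 * ω * t) * ‖C (T t x)‖ ^ 2) (Set.Ioi 0))
    (h1 : ∀ x ∈ D,
      ‖x‖ ^ 2 ≤ M * ∫ t in Set.Ioi (0:ℝ), Real.exp (-2 * ω * t) * ‖C (T t x)‖ ^ 2)
    (h2 : ∀ x ∈ D,
      (∫ t in Set.Ioi (0:ℝ), Real.exp (-2 * ω * t) * ‖C (T t (T τ x))‖ ^ 2)
        ≤ M'' * ‖x‖ ^ 2) :
    ∃ m : ℝ, 0 < m ∧ ∀ x ∈ D, m ^ 2 * ‖x‖ ^ 2 ≤ ∫ t in (0:ℝ)..τ, ‖C (T t x)‖ ^ 2 :=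
  stmt12_general T hTadd D C M M'' ω τ hM hM'' hω hτ hsmall hint h1 h2
end

section
/- Let X and Y be Hilbert spaces, −A the generator of a strongly continuous semigroup (T(t))_{t≥0} on X, and C : D(A) → Y such that there exist constants 0 < m ≤ M with m²‖x‖² ≤ ∫₀^∞ ‖C T(t)x‖²_Y dt ≤ M²‖x‖² for all x ∈ D(A). Then the semigroup is similar to a contraction semigroup: the formula ⟨x, y⟩∼ := ∫₀^∞ ⟨C T(t)x, C T(t)y⟩_Y dt extends to an inner product on X whose norm is equivalent to the original norm, and ‖T(t)x‖∼ ≤ ‖x‖∼ for all x ∈ X and t ≥ 0. -/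
/-!
On the dense domain `D` the output energy `E x = ∫₀^∞ ‖C T(t)x‖² dt` is the square of the
`L²`-norm of `t ↦ ‖C T(t)x‖`, so `√E` is subadditive by Minkowski, and `E` satisfies the
parallelogram law because the norm of `Y` does pointwise. Together with `√E ≤ M‖·‖` this makes
`√E` an `M`-Lipschitz function on `D`, which extends (McShane) to all of `X`; every remaining property is a
closed condition and passes from `D` to `X` by density. Contractivity is the semigroup law:
`E (T(t)x) = ∫_t^∞ ‖C T(s)x‖² ds ≤ E x`.
-/

open MeasureTheory Set

section SquareIntegral

variable {α E : Type*} [MeasurableSpace α] {μ : Measure α}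

lemma memLp_norm_of_integrable_norm_sq [SeminormedAddCommGroup E] {f : α → E}
    (hf : Integrable (fun a => ‖f a‖ ^ 2) μ) : MemLp (fun a => ‖f a‖) 2 μ := by
  have hmeas : AEStronglyMeasurable (fun a => ‖f a‖) μ := by
    simpa only [Real.sqrt_sq (norm_nonneg _)] using
      Real.continuous_sqrt.comp_aestronglyMeasurable hf.aestronglyMeasurable
  exact (memLp_two_iff_integrable_sq hmeas).2 hf

lemma sqrt_integral_norm_sq_eq_lpNorm [SeminormedAddCommGroup E] {f : α → E}
    (hf : Integrable (fun a => ‖f a‖ ^ 2) μ) :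
    √(∫ a, ‖f a‖ ^ 2 ∂μ) = lpNorm (fun a => ‖f a‖) 2 μ := by
  rw [lpNorm_eq_integral_norm_rpow_toReal two_ne_zero ENNReal.ofNat_ne_top
    (memLp_norm_of_integrable_norm_sq hf).aestronglyMeasurable, Real.sqrt_eq_rpow]
  norm_num

lemma sqrt_integral_norm_add_sq_le [SeminormedAddCommGroup E] {f g : α → E}
    (hf : Integrable (fun a => ‖f a‖ ^ 2) μ) (hg : Integrable (fun a => ‖g a‖ ^ 2) μ)
    (hfg : Integrable (fun a => ‖f a + g a‖ ^ 2) μ) :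
    √(∫ a, ‖f a + g a‖ ^ 2 ∂μ) ≤ √(∫ a, ‖f a‖ ^ 2 ∂μ) + √(∫ a, ‖g a‖ ^ 2 ∂μ) := by
  rw [sqrt_integral_norm_sq_eq_lpNorm hf, sqrt_integral_norm_sq_eq_lpNorm hg,
    sqrt_integral_norm_sq_eq_lpNorm hfg]
  have hf₂ := memLp_norm_of_integrable_norm_sq hf
  calc lpNorm (fun a => ‖f a + g a‖) 2 μ ≤ lpNorm ((fun a => ‖f a‖) + fun a => ‖g a‖) 2 μ :=
        lpNorm_mono_real (hf₂.add (memLp_norm_of_integrable_norm_sq hg))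
          fun a => by simpa using norm_add_le (f a) (g a)
    _ ≤ _ := lpNorm_add_le hf₂ (by norm_num)

lemma integral_norm_add_sq_add_integral_norm_sub_sq {𝕜 : Type*} [RCLike 𝕜]
    [NormedAddCommGroup E] [InnerProductSpace 𝕜 E] {f g : α → E}
    (hf : Integrable (fun a => ‖f a‖ ^ 2) μ) (hg : Integrable (fun a => ‖g a‖ ^ 2) μ)
    (hadd : Integrable (fun a => ‖f a + g a‖ ^ 2) μ)
    (hsub : Integrable (fun a => ‖f a - g a‖ ^ 2) μ) :
    ∫ a, ‖f a + g a‖ ^ 2 ∂μ + ∫ a, ‖f a - g a‖ ^ 2 ∂μ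
      = 2 * ∫ a, ‖f a‖ ^ 2 ∂μ + 2 * ∫ a, ‖g a‖ ^ 2 ∂μ := by
  rw [← integral_add hadd hsub, ← integral_const_mul, ← integral_const_mul,
    ← integral_add (hf.const_mul 2) (hg.const_mul 2)]
  congr 1 with a
  have := parallelogram_law_with_norm 𝕜 (f a) (g a)
  simp only [sq]
  linarith

end SquareIntegral

lemma setIntegral_Ioi_comp_add_right (f : ℝ → ℝ) (t : ℝ) :
    ∫ s in Ioi 0, f (s + t) = ∫ s in Ioi t, f s := by
  have := (measurePreserving_add_right volume t).setIntegral_preimage_emb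
    (MeasurableEquiv.addRight t).measurableEmbedding f (Ioi t)
  simpa [preimage_add_const_Ioi] using this

section OutputEnergy

variable {𝕜 X Y : Type*} [RCLike 𝕜] [NormedAddCommGroup X] [NormedSpace 𝕜 X]
  [NormedAddCommGroup Y] [NormedSpace 𝕜 Y]

noncomputable def outputEnergy (C : X →ₗ[𝕜] Y) (T : ℝ → X →L[𝕜] X) (x : X) : ℝ :=
  ∫ t in Ioi 0, ‖C (T t x)‖ ^ 2

variable {C : X →ₗ[𝕜] Y} {T : ℝ → X →L[𝕜] X} {D : Submodule 𝕜 X}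

lemma outputEnergy_nonneg (x : X) : 0 ≤ outputEnergy C T x :=
  integral_nonneg fun _ => sq_nonneg _

lemma sqrt_outputEnergy_add_le
    (hint : ∀ x ∈ D, IntegrableOn (fun t => ‖C (T t x)‖ ^ 2) (Ioi 0))
    {x y : X} (hx : x ∈ D) (hy : y ∈ D) :
    √(outputEnergy C T (x + y)) ≤ √(outputEnergy C T x) + √(outputEnergy C T y) := by
  have h := hint _ (D.add_mem hx hy)
  simp only [map_add] at h
  simpa only [outputEnergy, map_add] using sqrt_integral_norm_add_sq_le (hint x hx) (hint y hy) h

lemma outputEnergy_apply_le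
    (hT : ∀ s t : ℝ, 0 ≤ s → 0 ≤ t → T (s + t) = (T s).comp (T t))
    {x : X} (hx : IntegrableOn (fun t => ‖C (T t x)‖ ^ 2) (Ioi 0)) {t : ℝ} (ht : 0 ≤ t) :
    outputEnergy C T (T t x) ≤ outputEnergy C T x := by
  calc outputEnergy C T (T t x) = ∫ s in Ioi 0, ‖C (T (s + t) x)‖ ^ 2 :=
        setIntegral_congr_fun measurableSet_Ioi fun s hs => by simp [hT s t hs.le ht]
    _ = ∫ s in Ioi t, ‖C (T s x)‖ ^ 2 :=
        setIntegral_Ioi_comp_add_right (fun s => ‖C (T s x)‖ ^ 2) t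
    _ ≤ outputEnergy C T x :=
        setIntegral_mono_set hx (.of_forall fun _ => sq_nonneg _)
          (Ioi_subset_Ioi ht).eventuallyLE

end OutputEnergy

lemma outputEnergy_add_add_outputEnergy_sub {𝕜 X Y : Type*} [RCLike 𝕜] [NormedAddCommGroup X]
    [NormedSpace 𝕜 X] [NormedAddCommGroup Y] [InnerProductSpace 𝕜 Y] {C : X →ₗ[𝕜] Y}
    {T : ℝ → X →L[𝕜] X} {D : Submodule 𝕜 X}
    (hint : ∀ x ∈ D, IntegrableOn (fun t => ‖C (T t x)‖ ^ 2) (Ioi 0))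
    {x y : X} (hx : x ∈ D) (hy : y ∈ D) :
    outputEnergy C T (x + y) + outputEnergy C T (x - y)
      = 2 * outputEnergy C T x + 2 * outputEnergy C T y := by
  have hadd := hint _ (D.add_mem hx hy)
  have hsub := hint _ (D.sub_mem hx hy)
  simp only [map_add, map_sub] at hadd hsub
  simpa only [outputEnergy, map_add, map_sub] using
    integral_norm_add_sq_add_integral_norm_sub_sq (𝕜 := 𝕜) (hint x hx) (hint y hy) hadd hsub

lemma lipschitzOnWith_of_subadditive {X : Type*} [SeminormedAddCommGroup X] {D : AddSubgroup X}
    {F : X → ℝ} {M : ℝ} (hadd : ∀ x ∈ D, ∀ y ∈ D, F (x + y) ≤ F x + F y)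
    (hle : ∀ x ∈ D, F x ≤ M * ‖x‖) : LipschitzOnWith (Real.toNNReal M) F D := by
  have key : ∀ x ∈ D, ∀ y ∈ D, F x - F y ≤ M * ‖x - y‖ := fun x hx y hy => by
    have := hadd y hy (x - y) (D.sub_mem hx hy)
    rw [add_sub_cancel] at this
    linarith [hle (x - y) (D.sub_mem hx hy)]
  refine .of_dist_le' fun x hx y hy => ?_
  rw [Real.dist_eq, dist_eq_norm, abs_sub_le_iff]
  exact ⟨key x hx y hy, norm_sub_rev x y ▸ key y hy x hx⟩

theorem stmt13_general {X Y : Type*} [NormedAddCommGroup X] [InnerProductSpace ℂ X]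
    [NormedAddCommGroup Y] [InnerProductSpace ℂ Y]
    (T : ℝ → X →L[ℂ] X)
    (hTadd : ∀ t s : ℝ, 0 ≤ t → 0 ≤ s → T (t + s) = (T t).comp (T s))
    (D : Submodule ℂ X) (hD : Dense (D : Set X))
    (hTD : ∀ x ∈ D, ∀ t : ℝ, 0 ≤ t → T t x ∈ D)
    (C : X → Y) (hC : IsLinearMap ℂ C)
    (m M : ℝ) (hm : 0 < m) (hmM : m ≤ M)
    (hint : ∀ x ∈ D, IntegrableOn (fun t => ‖C (T t x)‖ ^ 2) (Set.Ioi 0))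
    (hlow : ∀ x ∈ D, m ^ 2 * ‖x‖ ^ 2 ≤ ∫ t in Set.Ioi (0:ℝ), ‖C (T t x)‖ ^ 2)
    (hup : ∀ x ∈ D, (∫ t in Set.Ioi (0:ℝ), ‖C (T t x)‖ ^ 2) ≤ M ^ 2 * ‖x‖ ^ 2) :
    ∃ N : X → ℝ,
      (∀ x, 0 ≤ N x) ∧
      (∀ x ∈ D, N x ^ 2 = ∫ t in Set.Ioi (0:ℝ), ‖C (T t x)‖ ^ 2) ∧
      (∀ x : X, m * ‖x‖ ≤ N x ∧ N x ≤ M * ‖x‖) ∧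
      (∀ x y : X, N (x + y) ^ 2 + N (x - y) ^ 2 = 2 * N x ^ 2 + 2 * N y ^ 2) ∧
      (∀ t : ℝ, 0 ≤ t → ∀ x : X, N (T t x) ≤ N x) := by
  set L := IsLinearMap.mk' C hC
  set E := outputEnergy L T
  have hM : 0 ≤ M := hm.le.trans hmM
  have hEup : ∀ x ∈ D, √(E x) ≤ M * ‖x‖ := fun x hx =>
    (Real.sqrt_le_left (by positivity)).2 (by rw [mul_pow]; exact hup x hx)
  have hlip : LipschitzOnWith (Real.toNNReal M) (fun x => √(E x)) D :=
    lipschitzOnWith_of_subadditive (D := D.toAddSubgroup)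
      (fun x hx y hy => sqrt_outputEnergy_add_le hint hx hy) hEup
  obtain ⟨N, hN, hNE⟩ := hlip.extend_real
  have hNc := hN.continuous
  have hND : ∀ x ∈ D, N x ^ 2 = E x := fun x hx => by
    rw [← hNE hx, Real.sq_sqrt (outputEnergy_nonneg x)]
  have hNlow : ∀ x, m * ‖x‖ ≤ N x := hD.induction
    (fun x hx => hNE hx ▸ Real.le_sqrt_of_sq_le (by rw [mul_pow]; exact hlow x hx))
    (isClosed_le (by fun_prop) hNc)
  refine ⟨N, fun x => (by positivity : 0 ≤ m * ‖x‖).trans (hNlow x), hND,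
    fun x => ⟨hNlow x, ?_⟩, fun x y => ?_, fun t ht => ?_⟩
  · exact hD.induction (fun x hx => hNE hx ▸ hEup x hx) (isClosed_le hNc (by fun_prop)) x
  · refine (hD.prod hD).induction (P := fun p : X × X =>
      N (p.1 + p.2) ^ 2 + N (p.1 - p.2) ^ 2 = 2 * N p.1 ^ 2 + 2 * N p.2 ^ 2)
      (fun p ⟨hx, hy⟩ => ?_) (isClosed_eq (by fun_prop) (by fun_prop)) (x, y)
    rw [hND _ (D.add_mem hx hy), hND _ (D.sub_mem hx hy), hND _ hx, hND _ hy]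
    exact outputEnergy_add_add_outputEnergy_sub hint hx hy
  · refine hD.induction (fun x hx => ?_) (isClosed_le (hNc.comp (T t).continuous) hNc)
    rw [← hNE hx, ← hNE (hTD x hx t ht)]
    exact Real.sqrt_le_sqrt (outputEnergy_apply_le (C := L) hTadd (hint x hx) ht)

/-- On Hilbert spaces, an admissible and exactly observable (in infinite time) system is
similar to a contraction semigroup: the new norm `N x = (∫₀^∞ ‖C T(t)x‖² dt)^{1/2}`
(defined on the dense domain `D` and extended by continuity) is equivalent to the
original one, satisfies the parallelogram law (hence comes from an inner product), and
makes each `T(t)` a contraction. -/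
theorem stmt13 {X Y : Type*} [NormedAddCommGroup X] [InnerProductSpace ℂ X]
    [CompleteSpace X] [NormedAddCommGroup Y] [InnerProductSpace ℂ Y] [CompleteSpace Y]
    (T : ℝ → X →L[ℂ] X)
    (hT0 : T 0 = 1)
    (hTadd : ∀ t s : ℝ, 0 ≤ t → 0 ≤ s → T (t + s) = (T t).comp (T s))
    (hTcont : ∀ x : X, ContinuousOn (fun t => T t x) (Set.Ici 0))
    (D : Submodule ℂ X) (hD : Dense (D : Set X))
    (hTD : ∀ x ∈ D, ∀ t : ℝ, 0 ≤ t → T t x ∈ D)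
    (C : X → Y) (hC : IsLinearMap ℂ C)
    (m M : ℝ) (hm : 0 < m) (hmM : m ≤ M)
    (hint : ∀ x ∈ D, IntegrableOn (fun t => ‖C (T t x)‖ ^ 2) (Set.Ioi 0))
    (hlow : ∀ x ∈ D, m ^ 2 * ‖x‖ ^ 2 ≤ ∫ t in Set.Ioi (0:ℝ), ‖C (T t x)‖ ^ 2)
    (hup : ∀ x ∈ D, (∫ t in Set.Ioi (0:ℝ), ‖C (T t x)‖ ^ 2) ≤ M ^ 2 * ‖x‖ ^ 2) :
    ∃ N : X → ℝ,
      (∀ x, 0 ≤ N x) ∧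
      (∀ x ∈ D, N x ^ 2 = ∫ t in Set.Ioi (0:ℝ), ‖C (T t x)‖ ^ 2) ∧
      (∀ x : X, m * ‖x‖ ≤ N x ∧ N x ≤ M * ‖x‖) ∧
      (∀ x y : X, N (x + y) ^ 2 + N (x - y) ^ 2 = 2 * N x ^ 2 + 2 * N y ^ 2) ∧
      (∀ t : ℝ, 0 ≤ t → ∀ x : X, N (T t x) ≤ N x) :=
  stmt13_general T hTadd D hD hTD C hC m M hm hmM hint hlow hup
end

section
/- For a sequence (αₙ)_{n ∈ ℤ\{0}} ∈ ℓ² and τ > 2, the Ingham inequalities hold: (2τ/π)(1 − 4/τ²) Σ|αₙ|² ≤ ∫₀^τ |Σₙ αₙ e^{inπt}|² dt ≤ (8τ/π)(1 + 4/τ²) Σ|αₙ|². -/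
/-!
Every partial sum `S(t) = ∑_{|n| ≤ N} α_n e^{inπt}` is `2`-periodic, and by orthogonality of the
exponentials on a period, `∫₀² |S|² = 2 ∑ |α_n|²`. Since `[0, τ]` contains `⌊τ/2⌋` and is covered by
`⌊τ/2⌋ + 1` periods, `∫₀^τ |S|²` lies between `2⌊τ/2⌋ ∑ |α_n|²` and `2(⌊τ/2⌋ + 1) ∑ |α_n|²`, which
are sharper than Ingham's constants. Both sides pass to the `L²(0, τ)` limit.
-/

open MeasureTheory Filter Topology Complex
open scoped ComplexConjugate

section L2

variable {α E : Type*} [MeasurableSpace α] {μ : Measure α} [NormedAddCommGroup E]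

theorem MeasureTheory.MemLp.integral_norm_sq_eq {f : α → E} (hf : MemLp f 2 μ) :
    ∫ a, ‖f a‖ ^ 2 ∂μ = ‖hf.toLp f‖ ^ 2 := by
  rw [Lp.norm_toLp, hf.eLpNorm_eq_integral_rpow_norm two_ne_zero ENNReal.ofNat_ne_top,
    ENNReal.toReal_ofReal (by positivity), ← Real.rpow_natCast, ← Real.rpow_mul (by positivity)]
  norm_num

theorem tendsto_integral_norm_sq_of_tendsto_integral_norm_sub_sq {ι : Type*} {l : Filter ι}
    {f : α → E} {g : ι → α → E} (hf : MemLp f 2 μ) (hg : ∀ i, MemLp (g i) 2 μ)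
    (h : Tendsto (fun i => ∫ a, ‖f a - g i a‖ ^ 2 ∂μ) l (𝓝 0)) :
    Tendsto (fun i => ∫ a, ‖g i a‖ ^ 2 ∂μ) l (𝓝 (∫ a, ‖f a‖ ^ 2 ∂μ)) := by
  have hsub : ∀ i, ∫ a, ‖f a - g i a‖ ^ 2 ∂μ = ‖hf.toLp f - (hg i).toLp (g i)‖ ^ 2 := fun i => by
    rw [← MemLp.toLp_sub, ← (hf.sub (hg i)).integral_norm_sq_eq]; rfl
  have hlim : Tendsto (fun i => (hg i).toLp (g i)) l (𝓝 (hf.toLp f)) := by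
    rw [tendsto_iff_norm_sub_tendsto_zero]
    simpa [hsub, norm_sub_rev] using h.sqrt
  simpa only [hf.integral_norm_sq_eq, (hg _).integral_norm_sq_eq] using hlim.norm.pow 2

end L2

theorem Function.Periodic.intervalIntegral_zero_natCast_mul {g : ℝ → ℝ} {T : ℝ}
    (hg : Function.Periodic g T) (h_int : ∀ t₁ t₂, IntervalIntegrable g volume t₁ t₂) (k : ℕ) :
    ∫ x in 0..k * T, g x = k * ∫ x in 0..T, g x := by
  simpa using hg.intervalIntegral_add_zsmul_eq k 0 h_int

theorem Function.Periodic.mul_integral_le_integral {g : ℝ → ℝ} {T a : ℝ} {k : ℕ}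
    (hg : Function.Periodic g T) (h_int : ∀ t₁ t₂, IntervalIntegrable g volume t₁ t₂)
    (hg0 : 0 ≤ g) (hT : 0 ≤ T) (hka : k * T ≤ a) :
    k * ∫ x in 0..T, g x ≤ ∫ x in 0..a, g x := by
  rw [← hg.intervalIntegral_zero_natCast_mul h_int]
  exact intervalIntegral.integral_mono_interval le_rfl (by positivity) hka
    (ae_of_all _ fun x => hg0 x) (h_int 0 a)

theorem Function.Periodic.integral_le_mul_integral {g : ℝ → ℝ} {T a : ℝ} {k : ℕ}
    (hg : Function.Periodic g T) (h_int : ∀ t₁ t₂, IntervalIntegrable g volume t₁ t₂)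
    (hg0 : 0 ≤ g) (ha : 0 ≤ a) (hak : a ≤ (k + 1) * T) :
    ∫ x in 0..a, g x ≤ (k + 1) * ∫ x in 0..T, g x := by
  rw [← Nat.cast_succ, ← hg.intervalIntegral_zero_natCast_mul h_int]
  exact intervalIntegral.integral_mono_interval le_rfl ha (by simpa using hak)
    (ae_of_all _ fun x => hg0 x) (h_int _ _)

noncomputable def trigSum (β : ℤ → ℂ) (s : Finset ℤ) (t : ℝ) : ℂ :=
  ∑ n ∈ s, β n * exp (I * n * Real.pi * t)

theorem integral_exp_I_int_mul_pi_zero_two (k : ℤ) :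
    ∫ t in (0:ℝ)..2, exp (I * k * Real.pi * t) = if k = 0 then 2 else 0 := by
  rcases eq_or_ne k 0 with rfl | hk
  · simp
  · have hc : I * k * Real.pi ≠ 0 := by simp [hk, Real.pi_ne_zero]
    rw [if_neg hk, integral_exp_mul_complex hc,
      show I * k * Real.pi * ((2:ℝ):ℂ) = k * (2 * Real.pi * I) by push_cast; ring,
      exp_int_mul_two_pi_mul_I]
    simp

theorem norm_exp_I_int_mul_pi (n : ℤ) (t : ℝ) : ‖exp (I * n * Real.pi * t)‖ = 1 := by
  rw [show I * n * Real.pi * (t:ℂ) = ((n * Real.pi * t : ℝ) : ℂ) * I by push_cast; ring,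
    norm_exp_ofReal_mul_I]

namespace trigSum
variable (β : ℤ → ℂ) (s : Finset ℤ)

@[continuity, fun_prop]
theorem continuous : Continuous (trigSum β s) := by
  unfold trigSum; fun_prop

theorem periodic : Function.Periodic (trigSum β s) 2 := fun t => by
  refine Finset.sum_congr rfl fun n _ => ?_
  rw [show I * n * Real.pi * ((t + 2 : ℝ) : ℂ) = I * n * Real.pi * t + n * (2 * Real.pi * I) by
      push_cast; ring, exp_add, exp_int_mul_two_pi_mul_I, mul_one]

theorem norm_le (t : ℝ) : ‖trigSum β s t‖ ≤ ∑ n ∈ s, ‖β n‖ :=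
  (norm_sum_le _ _).trans_eq <| Finset.sum_congr rfl fun n _ => by
    rw [norm_mul, norm_exp_I_int_mul_pi, mul_one]

theorem memLp (p : ENNReal) (μ : Measure ℝ) [IsFiniteMeasure μ] : MemLp (trigSum β s) p μ :=
  MemLp.of_bound (continuous β s).aestronglyMeasurable _ (ae_of_all _ (norm_le β s))

theorem mul_conj_eq_sum (t : ℝ) : trigSum β s t * conj (trigSum β s t) =
    ∑ n ∈ s, ∑ m ∈ s, β n * conj (β m) * exp (I * (n - m : ℤ) * Real.pi * t) := by
  simp only [trigSum, map_sum, Finset.sum_mul_sum, map_mul, ← exp_conj]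
  refine Finset.sum_congr rfl fun n _ => Finset.sum_congr rfl fun m _ => ?_
  rw [mul_mul_mul_comm, ← exp_add]
  congr 2
  simp only [conj_I, conj_ofReal, map_intCast]
  push_cast; ring

theorem integral_norm_sq_zero_two :
    ∫ t in (0:ℝ)..2, ‖trigSum β s t‖ ^ 2 = 2 * ∑ n ∈ s, ‖β n‖ ^ 2 := by
  apply ofReal_injective
  calc ((∫ t in (0:ℝ)..2, ‖trigSum β s t‖ ^ 2 : ℝ) : ℂ)
      = ∫ t in (0:ℝ)..2,
          ∑ n ∈ s, ∑ m ∈ s, β n * conj (β m) * exp (I * (n - m : ℤ) * Real.pi * t) := by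
        rw [← intervalIntegral.integral_ofReal]
        simp only [ofReal_pow, ← mul_conj', mul_conj_eq_sum]
    _ = ∑ n ∈ s, ∑ m ∈ s, β n * conj (β m) * if n - m = 0 then 2 else 0 := by
        rw [intervalIntegral.integral_finsetSum fun n _ => by
          apply Continuous.intervalIntegrable; fun_prop]
        refine Finset.sum_congr rfl fun n _ => ?_
        rw [intervalIntegral.integral_finsetSum fun m _ => by
          apply Continuous.intervalIntegrable; fun_prop]
        simp only [intervalIntegral.integral_const_mul, integral_exp_I_int_mul_pi_zero_two]
    _ = _ := by
        simp [sub_eq_zero, Finset.mul_sum, mul_conj', mul_comm]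

theorem mul_le_integral_norm_sq {k : ℕ} {τ : ℝ} (hkτ : 2 * k ≤ τ) :
    k * (2 * ∑ n ∈ s, ‖β n‖ ^ 2) ≤ ∫ t in (0:ℝ)..τ, ‖trigSum β s t‖ ^ 2 := by
  rw [← integral_norm_sq_zero_two]
  exact (periodic β s).comp (fun z => ‖z‖ ^ 2) |>.mul_integral_le_integral
    (fun _ _ => by apply Continuous.intervalIntegrable; fun_prop) (fun _ => sq_nonneg _)
    zero_le_two (by linarith)

theorem integral_norm_sq_le {k : ℕ} {τ : ℝ} (hτ : 0 ≤ τ) (hτk : τ ≤ 2 * (k + 1)) :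
    ∫ t in (0:ℝ)..τ, ‖trigSum β s t‖ ^ 2 ≤ (k + 1) * (2 * ∑ n ∈ s, ‖β n‖ ^ 2) := by
  rw [← integral_norm_sq_zero_two]
  exact (periodic β s).comp (fun z => ‖z‖ ^ 2) |>.integral_le_mul_integral
    (fun _ _ => by apply Continuous.intervalIntegrable; fun_prop) (fun _ => sq_nonneg _)
    hτ (by linarith)

end trigSum

theorem ingham_lower_constant_le {τ m : ℝ} (hm : 1 ≤ m) (hτ : 0 < τ) (hτm : τ ≤ 2 * (m + 1)) :
    2 * τ / Real.pi * (1 - 4 / τ ^ 2) ≤ 2 * m := by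
  -- the convex quadratic `τ ^ 2 - 3 m τ - 4` is nonpositive at `τ = 0` and at `τ = 2 (m + 1)`
  have hquad : τ ^ 2 - 4 ≤ 3 * m * τ := by
    have hτ' : 0 ≤ τ * (2 * (m + 1) - τ) := mul_nonneg hτ.le (by linarith)
    rcases le_total m 2 with h2 | h2
    · nlinarith [mul_nonneg (sub_nonneg.2 h2) (sub_nonneg.2 hτm)]
    · nlinarith [mul_nonneg (sub_nonneg.2 h2) hτ.le]
  have hπ : 3 * (m * τ) ≤ Real.pi * (m * τ) :=
    mul_le_mul_of_nonneg_right Real.pi_gt_three.le (by positivity)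
  have hrw : 2 * τ / Real.pi * (1 - 4 / τ ^ 2) = 2 * (τ ^ 2 - 4) / (Real.pi * τ) := by field_simp
  rw [hrw, div_le_iff₀ (by positivity)]
  nlinarith

theorem le_ingham_upper_constant {τ m : ℝ} (hτ : 2 ≤ τ) (hm : 2 * m ≤ τ) :
    2 * (m + 1) ≤ 8 * τ / Real.pi * (1 + 4 / τ ^ 2) := by
  have h8 : 2 * τ ≤ 8 * τ / Real.pi := by
    rw [le_div_iff₀ Real.pi_pos]; nlinarith [Real.pi_lt_four]
  have h1 : 8 * τ / Real.pi ≤ 8 * τ / Real.pi * (1 + 4 / τ ^ 2) :=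
    le_mul_of_one_le_right (by positivity) (by simp; positivity)
  linarith

theorem stmt18_general (α : ℤ → ℂ)
    (hsum : Summable fun n : ℤ => ‖α n‖ ^ 2)
    (τ : ℝ) (hτ : 2 < τ)
    (f : ℝ → ℂ)
    (hmem : MeasureTheory.MemLp f 2 (MeasureTheory.volume.restrict (Set.Ioc 0 τ)))
    (hf : Tendsto (fun N : ℕ => ∫ t in (0:ℝ)..τ,
        ‖f t - ∑ n ∈ Finset.Icc (-(N:ℤ)) (N:ℤ),
            α n * Complex.exp (Complex.I * n * Real.pi * t)‖ ^ 2)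
      atTop (nhds 0)) :
    (2 * τ / Real.pi) * (1 - 4 / τ ^ 2) * (∑' n : ℤ, ‖α n‖ ^ 2)
        ≤ ∫ t in (0:ℝ)..τ, ‖f t‖ ^ 2 ∧
    (∫ t in (0:ℝ)..τ, ‖f t‖ ^ 2)
        ≤ (8 * τ / Real.pi) * (1 + 4 / τ ^ 2) * (∑' n : ℤ, ‖α n‖ ^ 2) := by
  set S : ℕ → ℝ → ℂ := fun N => trigSum α (Finset.Icc (-(N:ℤ)) N)
  set Q := ∑' n : ℤ, ‖α n‖ ^ 2
  have hτ0 : 0 ≤ τ := by linarith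
  have hlimS : Tendsto (fun N => ∫ t in (0:ℝ)..τ, ‖S N t‖ ^ 2) atTop
      (𝓝 (∫ t in (0:ℝ)..τ, ‖f t‖ ^ 2)) := by
    simp only [intervalIntegral.integral_of_le hτ0] at hf ⊢
    exact tendsto_integral_norm_sq_of_tendsto_integral_norm_sub_sq hmem
      (fun N => trigSum.memLp _ _ _ _) hf
  have hlimQ : Tendsto (fun N : ℕ => 2 * ∑ n ∈ Finset.Icc (-(N:ℤ)) N, ‖α n‖ ^ 2) atTop
      (𝓝 (2 * Q)) :=
    (hsum.hasSum.comp Finset.tendsto_Icc_neg).const_mul 2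
  set k := ⌊τ / 2⌋₊
  have hk : 2 * (k : ℝ) ≤ τ := by linarith [Nat.floor_le (by positivity : 0 ≤ τ / 2)]
  have hk' : τ ≤ 2 * ((k : ℝ) + 1) := by linarith [Nat.lt_floor_add_one (τ / 2)]
  have hk1 : (1 : ℝ) ≤ k := by exact_mod_cast Nat.one_le_floor_iff _ |>.2 (by linarith)
  have hlow : k * (2 * Q) ≤ ∫ t in (0:ℝ)..τ, ‖f t‖ ^ 2 :=
    le_of_tendsto_of_tendsto' (hlimQ.const_mul _) hlimS fun _ =>
      trigSum.mul_le_integral_norm_sq _ _ hk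
  have hhigh : ∫ t in (0:ℝ)..τ, ‖f t‖ ^ 2 ≤ (k + 1) * (2 * Q) :=
    le_of_tendsto_of_tendsto' hlimS (hlimQ.const_mul _) fun _ =>
      trigSum.integral_norm_sq_le _ _ hτ0 hk'
  have hQ0 : 0 ≤ Q := tsum_nonneg fun n => by positivity
  constructor
  · linarith [mul_le_mul_of_nonneg_right (ingham_lower_constant_le hk1 (by linarith) hk') hQ0]
  · linarith [mul_le_mul_of_nonneg_right (le_ingham_upper_constant hτ.le hk) hQ0]

/-- Ingham's inequalities with explicit constants: for an `ℓ²` family `(α_n)_{n ∈ ℤ∖{0}}`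
and `τ > 2`, the `L²(0,τ)`-sum `f` of the series `∑ α_n e^{inπt}` satisfies
`(2τ/π)(1 - 4/τ²) ∑|α_n|² ≤ ∫₀^τ |f|² ≤ (8τ/π)(1 + 4/τ²) ∑|α_n|²`. -/
theorem stmt18 (α : ℤ → ℂ) (hα0 : α 0 = 0)
    (hsum : Summable fun n : ℤ => ‖α n‖ ^ 2)
    (τ : ℝ) (hτ : 2 < τ)
    (f : ℝ → ℂ)
    (hmem : MeasureTheory.MemLp f 2 (MeasureTheory.volume.restrict (Set.Ioc 0 τ)))
    (hf : Tendsto (fun N : ℕ => ∫ t in (0:ℝ)..τ,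
        ‖f t - ∑ n ∈ Finset.Icc (-(N:ℤ)) (N:ℤ),
            α n * Complex.exp (Complex.I * n * Real.pi * t)‖ ^ 2)
      atTop (nhds 0)) :
    (2 * τ / Real.pi) * (1 - 4 / τ ^ 2) * (∑' n : ℤ, ‖α n‖ ^ 2)
        ≤ ∫ t in (0:ℝ)..τ, ‖f t‖ ^ 2 ∧
    (∫ t in (0:ℝ)..τ, ‖f t‖ ^ 2)
        ≤ (8 * τ / Real.pi) * (1 + 4 / τ ^ 2) * (∑' n : ℤ, ‖α n‖ ^ 2) :=
  stmt18_general α hsum τ hτ f hmem hf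
end
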